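/- arXiv:math/0505353 — 2 statements merged into one kernel-verified Lean document; each statement's English description precedes it below -/
import Mathlib

section
/- Theorem 4.2 (necessary Lyapunov conditions for static ROFS). Consider system (1.2a) with stabilized output Y = H(t,x) and measured output y = h(t,x), under hypotheses (A2), (A3) and (H2). Suppose there exists a continuous function k ∈ CU(ℕ × S; U) with f(t,d,0,k(t,0)) = 0 for all (t,d) ∈ ℕ × D such that the closed-loop system x(t+1) = f(t, d(t), x(t), k(t, h(t, x(t)))) with output Y(t) = H(t, x(t)) is non-uniformly in time RGAOS. Then there exist a function V ∈ CU(ℕ × X; [0,∞)), functions a₁, a₂ ∈ K∞, functions β₁, β₂ ∈ K⁺ and a constant λ ∈ (0,1) such that: a₁(‖H(t,x)‖_Y) ≤ V(t,x) ≤ a₂(β₂(t)‖x‖_X) for all (t,x) ∈ ℕ × X, and inf_{u ∈ U} sup{ V(t+1, f(t,d,x,u)) − λ·V(t,x) : x ∈ h⁻¹(t,y), d ∈ D } ≤ 0 for all (t,y) ∈ ℕ × S. Moreover, if k(t,0) = 0 for all t ∈ ℕ, then additionally sup{ V(t+1, f(t,d,x,0)) − λ·V(t,x) : x ∈ h⁻¹(t,0),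 d ∈ D } ≤ 0 for all t ∈ ℕ. -/
open Filter Topology Bornology Set

noncomputable section

/-- Class `K∞`: continuous, strictly increasing on `[0,∞)`, zero at zero, unbounded. -/
def IsKInf (a : ℝ → ℝ) : Prop :=
  ContinuousOn a (Set.Ici 0) ∧ StrictMonoOn a (Set.Ici 0) ∧ a 0 = 0 ∧
    Filter.Tendsto a Filter.atTop Filter.atTop

/-- Class `K⁺`: continuous and positive on `[0,∞)`. -/
def IsKPlus (b : ℝ → ℝ) : Prop :=
  ContinuousOn b (Set.Ici 0) ∧ ∀ t : ℝ, 0 ≤ t → 0 < b t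

/-- Class `KL`. -/
def IsKL (σ : ℝ → ℝ → ℝ) : Prop :=
  ContinuousOn (fun p : ℝ × ℝ => σ p.1 p.2) (Set.Ici 0 ×ˢ Set.Ici 0) ∧
  (∀ t : ℝ, 0 ≤ t → StrictMonoOn (fun s => σ s t) (Set.Ici 0) ∧ σ 0 t = 0) ∧
  (∀ s : ℝ, 0 ≤ s → AntitoneOn (fun t => σ s t) (Set.Ici 0) ∧
    Filter.Tendsto (fun t => σ s t) Filter.atTop (nhds 0))

/-- Membership in the class `CU(ℕ × A; W)` of the paper. -/
def MemCUOn {Z W : Type*} [NormedAddCommGroup Z] [NormedAddCommGroup W]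
    (A : Set Z) (G : ℕ → Z → W) : Prop :=
  (∀ t : ℕ, ContinuousOn (G t) A) ∧
  ∀ (T : ℕ) (B : Set Z), B ⊆ A → Bornology.IsBounded B → ∀ ε > (0 : ℝ),
    Bornology.IsBounded {w : W | ∃ t ≤ T, ∃ z ∈ B, w = G t z} ∧
    ∃ δ > (0 : ℝ), ∀ t ≤ T, ∀ z ∈ B, ∀ z' ∈ B, ‖z - z'‖ < δ → ‖G t z - G t z'‖ < ε

/-!
A Sontag-type reparametrisation of the `KL` bound gives `a ∈ K∞` and `Ψ` with
`a (σ s j) ≤ Ψ s * exp (-2 j)`: if `N m` bounds the times `j` with `σ n j ≥ exp (-m)` for some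
`n ≤ m`, one takes `a r = r * exp (-2 P (-log r))` with `P` a continuous majorant of `N ∘ ⌈·⌉₊`.
Along a closed-loop orbit issued from `(t, x)` the weighted output `exp j * a ‖H‖` is then at most
`Ψ (β t ‖x‖) * exp (-j)`, so its supremum `V t x` over all orbits and all `j` lies between
`a ‖H t x‖` and `Ψ (β t ‖x‖)`. Dropping the first step of an orbit shows
`V (t + 1) (f t d x (k t (h t x))) ≤ exp (-1) * V t x`, and `u = k t y` is the control required in
(4.2b). `V` is uniformly continuous on bounded sets because finitely many terms of the supremum are
equi-uniformly continuous there and the remaining ones are uniformly small.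
-/

def unitAverage (φ : ℝ → ℝ) (s : ℝ) : ℝ := ∫ u in s..s + 1, φ u

namespace Monotone

variable {φ : ℝ → ℝ} (hφ : Monotone φ)
include hφ

lemma le_unitAverage (s : ℝ) : φ s ≤ unitAverage φ s := by
  calc φ s = ∫ _ in s..s + 1, φ s := by simp
    _ ≤ unitAverage φ s :=
      intervalIntegral.integral_mono_on (by linarith) intervalIntegrable_const
        hφ.intervalIntegrable fun u hu => hφ hu.1

lemma unitAverage_mono : Monotone (unitAverage φ) := by
  have hshift : ∀ s, unitAverage φ s = ∫ u in (0 : ℝ)..1, φ (u + s) := fun s => by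
    rw [intervalIntegral.integral_comp_add_right, zero_add, add_comm 1 s, unitAverage]
  intro s s' hss'
  rw [hshift, hshift]
  exact intervalIntegral.integral_mono_on zero_le_one
    (hφ.comp (monotone_id.add_const s)).intervalIntegrable
    (hφ.comp (monotone_id.add_const s')).intervalIntegrable fun u _ => hφ (by linarith)

lemma continuous_unitAverage : Continuous (unitAverage φ) := by
  have hint : ∀ a b, IntervalIntegrable φ MeasureTheory.volume a b := fun _ _ =>
    hφ.intervalIntegrable
  have hprim := intervalIntegral.continuous_primitive hint 0
  have hdiff : unitAverage φ = fun s => (∫ u in (0 : ℝ)..s + 1, φ u) - ∫ u in (0 : ℝ)..s, φ u :=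
    funext fun s => (intervalIntegral.integral_interval_sub_left (hint _ _) (hint _ _)).symm
  rw [hdiff]
  exact (hprim.comp (continuous_add_const 1)).sub hprim

end Monotone

lemma exists_monotone_decay_index {g : ℕ → ℕ → ℝ} (hg : ∀ n, Tendsto (g n) atTop (𝓝 0)) :
    ∃ N : ℕ → ℕ, Monotone N ∧ ∀ n i j : ℕ, Real.exp (-i) ≤ g n j → j ≤ N (max n i) := by
  classical
  have hex : ∀ n i : ℕ, ∃ J, ∀ j ≥ J, g n j < Real.exp (-i) := fun n i =>
    eventually_atTop.1 ((hg n).eventually (gt_mem_nhds (Real.exp_pos _)))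
  have hM : ∀ n, Monotone fun i => Nat.find (hex n i) := fun n i i' hii' =>
    Nat.find_mono fun J hJ j hj => (hJ j hj).trans_le
      (Real.exp_le_exp.2 (neg_le_neg (Nat.cast_le.2 hii')))
  refine ⟨fun m => (Finset.range (m + 1)).sup fun n => Nat.find (hex n m), ?_, ?_⟩
  · intro m m' hmm'
    refine Finset.sup_le fun n hn => (hM n hmm').trans
      (Finset.le_sup (f := fun n => Nat.find (hex n m'))
        (Finset.mem_range.2 ((Finset.mem_range.1 hn).trans_le (by omega))))
  · intro n i j hj
    have hlt : j < Nat.find (hex n (max n i)) := by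
      by_contra! hge
      have := Nat.find_spec (hex n (max n i)) j hge
      have : Real.exp (-(max n i : ℕ)) ≤ Real.exp (-i) :=
        Real.exp_le_exp.2 (neg_le_neg (Nat.cast_le.2 (le_max_right n i)))
      linarith
    exact hlt.le.trans (Finset.le_sup (f := fun n' => Nat.find (hex n' (max n i)))
      (Finset.mem_range.2 (Nat.lt_succ_of_le (le_max_left n i))))

lemma isKInf_id_mul {ζ : ℝ → ℝ} (hζ_pos : ∀ r, 0 < ζ r) (hζ_le : ∀ r, ζ r ≤ 1)
    (hζ_mono : MonotoneOn ζ (Ioi 0)) (hζ_cont : ContinuousOn ζ (Ioi 0)) :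
    IsKInf fun r => r * ζ r := by
  refine ⟨fun r hr => ?_, fun r hr r' hr' hrr' => ?_, zero_mul _, ?_⟩
  · rcases (mem_Ici.1 hr).eq_or_lt with rfl | hr
    · have hsq : ∀ᶠ r in 𝓝[Ici 0] (0 : ℝ), r * ζ r ∈ Icc 0 r :=
        eventually_nhdsWithin_of_forall fun r hr =>
          ⟨mul_nonneg hr (hζ_pos r).le, mul_le_of_le_one_right hr (hζ_le r)⟩
      rw [ContinuousWithinAt, zero_mul]
      exact tendsto_of_tendsto_of_tendsto_of_le_of_le' tendsto_const_nhds
        (tendsto_nhdsWithin_of_tendsto_nhds tendsto_id) (hsq.mono fun _ h => h.1)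
        (hsq.mono fun _ h => h.2)
    · exact (continuousAt_id.mul (hζ_cont.continuousAt (Ioi_mem_nhds hr))).continuousWithinAt
  · rcases (mem_Ici.1 hr).eq_or_lt with rfl | hr
    · simpa using mul_pos hrr' (hζ_pos r')
    · calc r * ζ r < r' * ζ r := mul_lt_mul_of_pos_right hrr' (hζ_pos r)
        _ ≤ r' * ζ r' := mul_le_mul_of_nonneg_left (hζ_mono hr (hr.trans hrr') hrr'.le)
            (hr.trans hrr').le
  · refine tendsto_atTop_mono' atTop ?_ (tendsto_id.const_mul_atTop (hζ_pos 1))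
    filter_upwards [eventually_ge_atTop 1] with r hr
    rw [id, mul_comm]
    exact mul_le_mul_of_nonneg_left
      (hζ_mono (mem_Ioi.2 one_pos) (mem_Ioi.2 (one_pos.trans_le hr)) hr) (by linarith)

lemma isKInf_id_add {Ψ : ℝ → ℝ} (hΨ_cont : ContinuousOn Ψ (Ici 0)) (hΨ_mono : MonotoneOn Ψ (Ici 0))
    (hΨ_zero : Ψ 0 = 0) : IsKInf fun r => r + Ψ r := by
  refine ⟨continuousOn_id.add hΨ_cont, fun r hr r' hr' hrr' => ?_, by simp [hΨ_zero], ?_⟩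
  · exact add_lt_add_of_lt_of_le hrr' (hΨ_mono hr hr' hrr'.le)
  · refine tendsto_atTop_mono' atTop ?_ tendsto_id
    filter_upwards [eventually_ge_atTop 0] with r hr
    have : Ψ 0 ≤ Ψ r := hΨ_mono self_mem_Ici hr hr
    simp only [id]
    linarith

lemma IsKInf.nonneg {a : ℝ → ℝ} (ha : IsKInf a) {r : ℝ} (hr : 0 ≤ r) : 0 ≤ a r :=
  ha.2.2.1 ▸ ha.2.1.monotoneOn self_mem_Ici hr hr

lemma isKInf_mul_exp_neg_log {P : ℝ → ℝ} (hP_mono : Monotone P) (hP_cont : Continuous P)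
    (hP_nonneg : ∀ u, 0 ≤ P u) : IsKInf fun r => r * Real.exp (-(2 * P (-Real.log r))) :=
  isKInf_id_mul (fun _ => Real.exp_pos _)
    (fun _ => Real.exp_le_one_iff.2 (neg_nonpos.2 (mul_nonneg zero_le_two (hP_nonneg _))))
    (fun _ hr _ _ hrr' => Real.exp_le_exp.2 <| neg_le_neg <| mul_le_mul_of_nonneg_left
      (hP_mono (neg_le_neg (Real.log_le_log hr hrr'))) zero_le_two)
    fun _ hr => (Real.continuous_exp.continuousAt.comp ((continuousAt_const.mul
      (hP_cont.continuousAt.comp (Real.continuousAt_log (ne_of_gt hr)).neg)).neg))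
        |>.continuousWithinAt

namespace IsKL

variable {σ : ℝ → ℝ → ℝ} (hσ : IsKL σ)
include hσ

lemma nonneg {s t : ℝ} (hs : 0 ≤ s) (ht : 0 ≤ t) : 0 ≤ σ s t := by
  rw [← (hσ.2.1 t ht).2]
  exact (hσ.2.1 t ht).1.monotoneOn self_mem_Ici hs hs

lemma mono_left {s s' t : ℝ} (hs : 0 ≤ s) (hss' : s ≤ s') (ht : 0 ≤ t) : σ s t ≤ σ s' t :=
  (hσ.2.1 t ht).1.monotoneOn hs (hs.trans hss') hss'

lemma le_zero_right {s t : ℝ} (hs : 0 ≤ s) (ht : 0 ≤ t) : σ s t ≤ σ s 0 :=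
  (hσ.2.2 s hs).1 self_mem_Ici ht ht

lemma natCast_le_of_decay_index {N : ℕ → ℕ} (hN_mono : Monotone N)
    (hN : ∀ n i j : ℕ, Real.exp (-i) ≤ σ n j → j ≤ N (max n i)) {s : ℝ} (hs : 0 ≤ s) {j : ℕ}
    (hpos : 0 < σ s j) : (j : ℝ) ≤ N ⌈s⌉₊ + N ⌈-Real.log (σ s j)⌉₊ := by
  have hexp : Real.exp (-⌈-Real.log (σ s j)⌉₊) ≤ σ ⌈s⌉₊ j :=
    calc Real.exp (-⌈-Real.log (σ s j)⌉₊) ≤ Real.exp (Real.log (σ s j)) :=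
          Real.exp_le_exp.2 (by linarith [Nat.le_ceil (-Real.log (σ s j))])
      _ = σ s j := Real.exp_log hpos
      _ ≤ σ ⌈s⌉₊ j := hσ.mono_left hs (Nat.le_ceil s) j.cast_nonneg
  have hj := (hN _ _ j hexp).trans (hN_mono.map_max.trans_le (max_le_add_of_nonneg
    (Nat.zero_le _) (Nat.zero_le _)))
  exact_mod_cast hj

theorem exists_isKInf_le_mul_exp : ∃ a Ψ : ℝ → ℝ, IsKInf a ∧ ContinuousOn Ψ (Ici 0) ∧
    MonotoneOn Ψ (Ici 0) ∧ Ψ 0 = 0 ∧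
    ∀ s ≥ 0, ∀ j : ℕ, a (σ s j) ≤ Ψ s * Real.exp (-(2 * j)) := by
  obtain ⟨N, hN_mono, hN⟩ := exists_monotone_decay_index (g := fun n j => σ n j)
    fun n => (hσ.2.2 n n.cast_nonneg).2.comp tendsto_natCast_atTop_atTop
  set φ : ℝ → ℝ := fun u => N ⌈u⌉₊
  have hφ : Monotone φ := fun u u' huu' => Nat.cast_le.2 (hN_mono (Nat.ceil_mono huu'))
  set P := unitAverage φ
  have hP_nonneg : ∀ u, 0 ≤ P u := fun u => (Nat.cast_nonneg _).trans (hφ.le_unitAverage u)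
  refine ⟨_, fun s => σ s 0 * Real.exp (2 * P s),
    isKInf_mul_exp_neg_log hφ.unitAverage_mono hφ.continuous_unitAverage hP_nonneg, ?_, ?_, ?_, ?_⟩
  · have hσ0 : ContinuousOn (fun s => σ s 0) (Ici 0) :=
      hσ.1.comp (continuousOn_id.prodMk continuousOn_const) fun s hs => ⟨hs, self_mem_Ici⟩
    exact hσ0.mul (Real.continuous_exp.comp
      (continuous_const.mul hφ.continuous_unitAverage)).continuousOn
  · exact fun s hs s' hs' hss' => mul_le_mul (hσ.mono_left hs hss' le_rfl)
      (Real.exp_le_exp.2 (mul_le_mul_of_nonneg_left (hφ.unitAverage_mono hss') zero_le_two))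
      (Real.exp_pos _).le (hσ.nonneg hs' le_rfl)
  · simp [(hσ.2.1 0 le_rfl).2]
  intro s hs j
  rcases (hσ.nonneg hs j.cast_nonneg).eq_or_lt with hzero | hpos
  · rw [← hzero, zero_mul]
    exact mul_nonneg (mul_nonneg (hσ.nonneg hs le_rfl) (Real.exp_pos _).le) (Real.exp_pos _).le
  have hj : (j : ℝ) ≤ P s + P (-Real.log (σ s j)) :=
    (hσ.natCast_le_of_decay_index hN_mono hN hs hpos).trans
      (add_le_add (hφ.le_unitAverage _) (hφ.le_unitAverage _))
  calc σ s j * Real.exp (-(2 * P (-Real.log (σ s j)))) ≤ σ s 0 * Real.exp (2 * P s - 2 * j) :=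
        mul_le_mul (hσ.le_zero_right hs j.cast_nonneg) (Real.exp_le_exp.2 (by linarith))
          (Real.exp_pos _).le (hσ.nonneg hs le_rfl)
    _ = σ s 0 * Real.exp (2 * P s) * Real.exp (-(2 * j)) := by
        rw [mul_assoc, ← Real.exp_add, sub_eq_add_neg]

end IsKL

def EquiCUOn {ι Z W : Type*} [PseudoMetricSpace Z] [PseudoMetricSpace W]
    (A : Set Z) (G : ι → Z → W) : Prop :=
  ∀ B ⊆ A, IsBounded B → IsBounded (⋃ i, G i '' B) ∧
    ∀ ε > (0 : ℝ), ∃ δ > (0 : ℝ), ∀ i, ∀ z ∈ B, ∀ z' ∈ B, dist z z' < δ →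
      dist (G i z) (G i z') < ε

namespace EquiCUOn

variable {ι κ Z W V : Type*} [PseudoMetricSpace Z] [PseudoMetricSpace W] [PseudoMetricSpace V]
  {A : Set Z}

lemma comp_index {G : ι → Z → W} (hG : EquiCUOn A G) (φ : κ → ι) : EquiCUOn A (G ∘ φ) := by
  intro B hBA hB
  refine ⟨(hG B hBA hB).1.subset (iUnion_subset fun k => subset_iUnion (fun i => G i '' B) (φ k)),
    fun ε hε => ?_⟩
  obtain ⟨δ, hδ, hδG⟩ := (hG B hBA hB).2 ε hε
  exact ⟨δ, hδ, fun k => hδG (φ k)⟩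

lemma comp {G : ι → Z → W} {C : Set W} {K : ι → W → V} (hK : EquiCUOn C K) (hG : EquiCUOn A G)
    (hGC : ∀ i, MapsTo (G i) A C) : EquiCUOn A (fun i => K i ∘ G i) := by
  intro B hBA hB
  have hGB : ⋃ i, G i '' B ⊆ C :=
    iUnion_subset fun i => (image_mono hBA).trans (hGC i).image_subset
  obtain ⟨hKbdd, hKuc⟩ := hK _ hGB (hG B hBA hB).1
  refine ⟨hKbdd.subset (iUnion_mono fun i => ?_), fun ε hε => ?_⟩
  · rw [image_comp]
    exact image_mono (subset_iUnion (fun i => G i '' B) i)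
  obtain ⟨η, hη, hηK⟩ := hKuc ε hε
  obtain ⟨δ, hδ, hδG⟩ := (hG B hBA hB).2 η hη
  exact ⟨δ, hδ, fun i z hz z' hz' hzz' => hηK i _ (mem_iUnion_of_mem i (mem_image_of_mem _ hz))
    _ (mem_iUnion_of_mem i (mem_image_of_mem _ hz')) (hδG i z hz z' hz' hzz')⟩

lemma prodMk {G : ι → Z → W} {G' : ι → Z → V} (hG : EquiCUOn A G) (hG' : EquiCUOn A G') :
    EquiCUOn A (fun i z => (G i z, G' i z)) := by
  intro B hBA hB
  obtain ⟨hbdd, huc⟩ := hG B hBA hB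
  obtain ⟨hbdd', huc'⟩ := hG' B hBA hB
  refine ⟨(hbdd.prod hbdd').subset ?_, fun ε hε => ?_⟩
  · rintro _ ⟨_, ⟨i, rfl⟩, z, hz, rfl⟩
    exact ⟨mem_iUnion_of_mem i (mem_image_of_mem _ hz), mem_iUnion_of_mem i (mem_image_of_mem _ hz)⟩
  obtain ⟨δ, hδ, hδG⟩ := huc ε hε
  obtain ⟨δ', hδ', hδG'⟩ := huc' ε hε
  refine ⟨min δ δ', lt_min hδ hδ', fun i z hz z' hz' hzz' => ?_⟩
  rw [Prod.dist_eq, max_lt_iff]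
  exact ⟨hδG i z hz z' hz' (hzz'.trans_le (min_le_left _ _)),
    hδG' i z hz z' hz' (hzz'.trans_le (min_le_right _ _))⟩

lemma ciSup [Nonempty κ] {G : ι → κ → Z → ℝ} (hG : EquiCUOn A (fun p : ι × κ => G p.1 p.2)) :
    EquiCUOn A (fun i z => ⨆ k, G i k z) := by
  intro B hBA hB
  obtain ⟨hbdd, huc⟩ := hG B hBA hB
  obtain ⟨C, hC⟩ := isBounded_iff_forall_norm_le.1 hbdd
  have hGC : ∀ i k, ∀ z ∈ B, |G i k z| ≤ C := fun i k z hz =>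
    hC _ (mem_iUnion_of_mem (i, k) (mem_image_of_mem _ hz))
  have hbddAbove : ∀ i, ∀ z ∈ B, BddAbove (range fun k => G i k z) := fun i z hz =>
    ⟨C, forall_mem_range.2 fun k => (abs_le.1 (hGC i k z hz)).2⟩
  refine ⟨(Metric.isBounded_Icc (-C) C).subset ?_, fun ε hε => ?_⟩
  · rintro _ ⟨_, ⟨i, rfl⟩, z, hz, rfl⟩
    obtain ⟨k⟩ := ‹Nonempty κ›
    exact ⟨(abs_le.1 (hGC i k z hz)).1.trans (le_ciSup (hbddAbove i z hz) k),
      ciSup_le fun k => (abs_le.1 (hGC i k z hz)).2⟩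
  obtain ⟨δ, hδ, hδG⟩ := huc (ε / 2) (half_pos hε)
  have hsup_le : ∀ i, ∀ z ∈ B, ∀ z' ∈ B, dist z z' < δ →
      ⨆ k, G i k z ≤ (⨆ k, G i k z') + ε / 2 := by
    intro i z hz z' hz' hzz'
    refine ciSup_le fun k => ?_
    have hk := hδG (i, k) z hz z' hz' hzz'
    rw [Real.dist_eq, abs_lt] at hk
    linarith [le_ciSup (hbddAbove i z' hz') k]
  refine ⟨δ, hδ, fun i z hz z' hz' hzz' => ?_⟩
  rw [Real.dist_eq, abs_lt]
  constructor
  · linarith [hsup_le i z' hz' z hz (by rwa [dist_comm])]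
  · linarith [hsup_le i z hz z' hz' hzz']

lemma of_tail {G : ℕ → ι → Z → ℝ} (hG : ∀ j, EquiCUOn A (G j))
    (htail : ∀ B ⊆ A, IsBounded B → ∀ ε > (0 : ℝ), ∃ J, ∀ j ≥ J, ∀ i, ∀ z ∈ B, |G j i z| ≤ ε) :
    EquiCUOn A (fun p : ℕ × ι => G p.1 p.2) := by
  intro B hBA hB
  refine ⟨?_, fun ε hε => ?_⟩
  · obtain ⟨J, hJ⟩ := htail B hBA hB 1 one_pos
    refine (((isBounded_biUnion_finset (Finset.range J)).2 fun j _ => (hG j B hBA hB).1).union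
      (Metric.isBounded_Icc (-1 : ℝ) 1)).subset ?_
    rintro _ ⟨_, ⟨⟨j, i⟩, rfl⟩, z, hz, rfl⟩
    rcases lt_or_ge j J with hj | hj
    · exact Or.inl (mem_biUnion (Finset.mem_coe.2 (Finset.mem_range.2 hj))
        (mem_iUnion_of_mem i (mem_image_of_mem _ hz)))
    · exact Or.inr (abs_le.1 (hJ j hj i z hz))
  obtain ⟨J, hJ⟩ := htail B hBA hB (ε / 3) (by positivity)
  choose δ hδ hδG using fun j => (hG j B hBA hB).2 ε hε
  set δJ := (Finset.range (J + 1)).inf' Finset.nonempty_range_add_one δ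
  have hδJ : 0 < δJ := (Finset.lt_inf'_iff _).2 fun j _ => hδ j
  refine ⟨δJ, hδJ, fun ⟨j, i⟩ z hz z' hz' hzz' => ?_⟩
  rcases lt_or_ge j J with hj | hj
  · exact hδG j i z hz z' hz' (hzz'.trans_le
      (Finset.inf'_le _ (Finset.mem_range.2 (Nat.lt_succ_of_lt hj))))
  · have h := hJ j hj i z hz
    have h' := hJ j hj i z' hz'
    rw [Real.dist_eq, abs_lt]
    rw [abs_le] at h h'
    constructor <;> linarith

end EquiCUOn

lemma LipschitzWith.equiCUOn {ι Z W : Type*} [PseudoMetricSpace Z] [PseudoMetricSpace W]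
    {K : NNReal} {g : Z → W} (hg : LipschitzWith K g) (A : Set Z) :
    EquiCUOn A (fun _ : ι => g) := by
  intro B _ hB
  refine ⟨(hg.isBounded_image hB).subset (iUnion_subset fun _ => subset_rfl), fun ε hε => ?_⟩
  obtain ⟨δ, hδ, hδg⟩ := Metric.uniformContinuous_iff.1 hg.uniformContinuous ε hε
  exact ⟨δ, hδ, fun _ z _ z' _ hzz' => hδg hzz'⟩

lemma ContinuousOn.equiCUOn {ι Z W : Type*} [PseudoMetricSpace Z] [ProperSpace Z]
    [PseudoMetricSpace W] {g : Z → W} {A : Set Z} (hg : ContinuousOn g A) (hA : IsClosed A) :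
    EquiCUOn A (fun _ : ι => g) := by
  intro B hBA hB
  have hK : IsCompact (closure B) := hB.isCompact_closure
  have hKA : closure B ⊆ A := closure_minimal hBA hA
  refine ⟨((hK.image_of_continuousOn (hg.mono hKA)).isBounded).subset
    (iUnion_subset fun _ => image_mono subset_closure), fun ε hε => ?_⟩
  obtain ⟨δ, hδ, hδg⟩ := Metric.uniformContinuousOn_iff.1
    (hK.uniformContinuousOn_of_continuous (hg.mono hKA)) ε hε
  exact ⟨δ, hδ, fun _ z hz z' hz' hzz' => hδg z (subset_closure hz) z' (subset_closure hz') hzz'⟩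

section MemCUOn

variable {Z W : Type*} [NormedAddCommGroup Z] [NormedAddCommGroup W] {A : Set Z} {G : ℕ → Z → W}

lemma equiCUOn_Iic_of_forall {T : ℕ}
    (hG : ∀ B ⊆ A, IsBounded B → ∀ ε > (0 : ℝ),
      IsBounded {w : W | ∃ t ≤ T, ∃ z ∈ B, w = G t z} ∧
      ∃ δ > (0 : ℝ), ∀ t ≤ T, ∀ z ∈ B, ∀ z' ∈ B, ‖z - z'‖ < δ → ‖G t z - G t z'‖ < ε) :
    EquiCUOn A (fun t : Iic T => G t) := by
  intro B hBA hB
  refine ⟨(hG B hBA hB 1 one_pos).1.subset ?_, fun ε hε => ?_⟩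
  · rintro _ ⟨_, ⟨t, rfl⟩, z, hz, rfl⟩
    exact ⟨t, t.2, z, hz, rfl⟩
  obtain ⟨-, δ, hδ, hδG⟩ := hG B hBA hB ε hε
  refine ⟨δ, hδ, fun t z hz z' hz' hzz' => ?_⟩
  rw [dist_eq_norm] at hzz' ⊢
  exact hδG t t.2 z hz z' hz' hzz'

lemma MemCUOn.equiCUOn (hG : MemCUOn A G) (T : ℕ) : EquiCUOn A (fun t : Iic T => G t) :=
  equiCUOn_Iic_of_forall (hG.2 T)

lemma memCUOn_univ_of_equiCUOn (hG : ∀ T : ℕ, EquiCUOn univ (fun t : Iic T => G t)) :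
    MemCUOn univ G := by
  refine ⟨fun t => (Metric.continuous_iff.2 fun z₀ ε hε => ?_).continuousOn,
    fun T B _ hB ε hε => ⟨?_, ?_⟩⟩
  · obtain ⟨-, huc⟩ := hG t _ (subset_univ _) (Metric.isBounded_ball (x := z₀) (r := 1))
    obtain ⟨δ, hδ, hδG⟩ := huc ε hε
    refine ⟨min δ 1, lt_min hδ one_pos, fun z hz => ?_⟩
    exact hδG ⟨t, mem_Iic.2 le_rfl⟩ z (hz.trans_le (min_le_right _ _)) z₀
      (Metric.mem_ball_self one_pos) (hz.trans_le (min_le_left _ _))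
  · refine (hG T B (subset_univ _) hB).1.subset ?_
    rintro _ ⟨t, ht, z, hz, rfl⟩
    exact mem_iUnion_of_mem ⟨t, ht⟩ (mem_image_of_mem _ hz)
  · obtain ⟨δ, hδ, hδG⟩ := (hG T B (subset_univ _) hB).2 ε hε
    refine ⟨δ, hδ, fun t ht z hz z' hz' hzz' => ?_⟩
    rw [← dist_eq_norm] at hzz' ⊢
    exact hδG ⟨t, ht⟩ z hz z' hz' hzz'

end MemCUOn

section Orbit

variable {X D : Type*} (F : ℕ → D → X → X)

def orbit (t : ℕ) (x : X) (d : ℕ → D) : ℕ → X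
  | 0 => x
  | j + 1 => F (t + j) (d j) (orbit t x d j)

lemma orbit_sub_succ {t τ : ℕ} (x : X) (d : ℕ → D) (hτ : t ≤ τ) :
    orbit F t x d (τ + 1 - t) = F τ (d (τ - t)) (orbit F t x d (τ - t)) := by
  rw [Nat.sub_add_comm hτ, orbit, Nat.add_sub_cancel' hτ]

lemma orbit_succ_start (t : ℕ) (x : X) {d₀ : D} {d d' : ℕ → D} (h0 : d' 0 = d₀)
    (hsucc : ∀ n, d' (n + 1) = d n) (j : ℕ) :
    orbit F (t + 1) (F t d₀ x) d j = orbit F t x d' (j + 1) := by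
  induction j with
  | zero => simp [orbit, h0]
  | succ j ih =>
    rw [orbit, ih, orbit.eq_2 F t x d' (j + 1), hsucc, Nat.add_right_comm t 1 j, add_assoc]

variable [PseudoMetricSpace X]

lemma equiCUOn_orbit (hF : ∀ T : ℕ, EquiCUOn univ (fun p : Iic T × D => F p.1 p.2))
    (T j : ℕ) : EquiCUOn univ (fun p : Iic T × (ℕ → D) => fun x => orbit F p.1 x p.2 j) := by
  induction j with
  | zero => exact LipschitzWith.id.equiCUOn univ
  | succ j ih =>
    exact ((hF (T + j)).comp_index fun p : Iic T × (ℕ → D) =>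
      (⟨p.1 + j, Nat.add_le_add_right (mem_Iic.1 p.1.2) j⟩, p.2 j)).comp ih fun _ _ _ => mem_univ _

end Orbit

section ConverseLyapunov

variable {X Y D : Type*} [NormedAddCommGroup Y]
  (F : ℕ → D → X → X) (H : ℕ → X → Y) (a : ℝ → ℝ)

def converseLyapunov (t : ℕ) (x : X) : ℝ :=
  ⨆ q : ℕ × (ℕ → D), Real.exp q.1 * a ‖H (t + q.1) (orbit F t x q.2 q.1)‖

variable {F H a} {w : ℕ → X → ℝ}
  (hdecay : ∀ t x d (j : ℕ), a ‖H (t + j) (orbit F t x d j)‖ ≤ w t x * Real.exp (-(2 * j)))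
include hdecay

lemma converseLyapunov_term_le_mul_exp (t : ℕ) (x : X) (d : ℕ → D) (j : ℕ) :
    Real.exp j * a ‖H (t + j) (orbit F t x d j)‖ ≤ w t x * Real.exp (-j) := by
  calc Real.exp j * a ‖H (t + j) (orbit F t x d j)‖
      ≤ Real.exp j * (w t x * Real.exp (-(2 * j))) :=
        mul_le_mul_of_nonneg_left (hdecay t x d j) (Real.exp_pos _).le
    _ = w t x * Real.exp (-j) := by
        rw [mul_left_comm, ← Real.exp_add]
        ring_nf

variable (ha : ∀ r, 0 ≤ r → 0 ≤ a r)
include ha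

lemma converseLyapunov_term_le (t : ℕ) (x : X) (d : ℕ → D) (j : ℕ) :
    Real.exp j * a ‖H (t + j) (orbit F t x d j)‖ ≤ w t x := by
  have hw : 0 ≤ w t x := nonneg_of_mul_nonneg_left ((ha _ (norm_nonneg _)).trans
    (hdecay t x d 0)) (Real.exp_pos _)
  exact (converseLyapunov_term_le_mul_exp hdecay t x d j).trans
    (mul_le_of_le_one_right hw (Real.exp_le_one_iff.2 (neg_nonpos.2 j.cast_nonneg)))

lemma bddAbove_converseLyapunov_terms (t : ℕ) (x : X) :
    BddAbove (range fun q : ℕ × (ℕ → D) => Real.exp q.1 * a ‖H (t + q.1) (orbit F t x q.2 q.1)‖) :=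
  ⟨w t x, forall_mem_range.2 fun q => converseLyapunov_term_le hdecay ha t x q.2 q.1⟩

lemma converseLyapunov_le [Nonempty D] (t : ℕ) (x : X) : converseLyapunov F H a t x ≤ w t x :=
  ciSup_le fun q => converseLyapunov_term_le hdecay ha t x q.2 q.1

lemma le_converseLyapunov [Nonempty D] (t : ℕ) (x : X) :
    a ‖H t x‖ ≤ converseLyapunov F H a t x := by
  obtain ⟨d⟩ := ‹Nonempty D›
  simpa [orbit, converseLyapunov] using
    le_ciSup (bddAbove_converseLyapunov_terms hdecay ha t x) (0, fun _ => d)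

lemma converseLyapunov_nonneg [Nonempty D] (t : ℕ) (x : X) : 0 ≤ converseLyapunov F H a t x :=
  (ha _ (norm_nonneg _)).trans (le_converseLyapunov hdecay ha t x)

lemma converseLyapunov_step [Nonempty D] (t : ℕ) (x : X) (d₀ : D) :
    converseLyapunov F H a (t + 1) (F t d₀ x) ≤ Real.exp (-1) * converseLyapunov F H a t x := by
  refine ciSup_le fun q => ?_
  obtain ⟨j, d⟩ := q
  set d' : ℕ → D := Stream'.cons d₀ d
  dsimp only
  rw [orbit_succ_start F t x (d₀ := d₀) (d := d) (d' := d') rfl (fun _ => rfl),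
    Nat.add_right_comm t 1 j]
  set A := a ‖H (t + (j + 1)) (orbit F t x d' (j + 1))‖
  have hterm : Real.exp ((j + 1 : ℕ) : ℝ) * A ≤ converseLyapunov F H a t x :=
    le_ciSup (bddAbove_converseLyapunov_terms hdecay ha t x) (j + 1, d')
  calc Real.exp j * A = Real.exp (-1) * (Real.exp ((j + 1 : ℕ) : ℝ) * A) := by
        rw [← mul_assoc, ← Real.exp_add]
        push_cast
        ring_nf
    _ ≤ Real.exp (-1) * converseLyapunov F H a t x :=
        mul_le_mul_of_nonneg_left hterm (Real.exp_pos _).le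

lemma equiCUOn_converseLyapunov [Nonempty D] [PseudoMetricSpace X]
    (hF : ∀ T : ℕ, EquiCUOn univ (fun p : Iic T × D => F p.1 p.2))
    (hH : ∀ T : ℕ, EquiCUOn univ (fun t : Iic T => H t)) (ha_cont : ContinuousOn a (Ici 0))
    (hw : ∀ (T : ℕ) (B : Set X), IsBounded B → ∃ C, ∀ t ≤ T, ∀ x ∈ B, w t x ≤ C) (T : ℕ) :
    EquiCUOn univ (fun t : Iic T => converseLyapunov F H a t) := by
  set G : ℕ → Iic T × (ℕ → D) → X → ℝ :=
    fun j p x => Real.exp j * a ‖H (p.1 + j) (orbit F p.1 x p.2 j)‖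
  have hG : ∀ j, EquiCUOn univ (G j) := by
    intro j
    have hH_orbit := ((hH (T + j)).comp_index fun p : Iic T × (ℕ → D) =>
      ⟨p.1 + j, Nat.add_le_add_right (mem_Iic.1 p.1.2) j⟩).comp (equiCUOn_orbit F hF T j)
      fun _ _ _ => mem_univ _
    have hnorm := (lipschitzWith_one_norm (E := Y)).equiCUOn (ι := Iic T × (ℕ → D)) univ
    have hweight : EquiCUOn (Ici 0) (fun _ : Iic T × (ℕ → D) => fun r => Real.exp j * a r) :=
      (continuousOn_const.mul ha_cont).equiCUOn isClosed_Ici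
    exact hweight.comp (hnorm.comp hH_orbit fun _ _ _ => mem_univ _) fun _ _ _ => norm_nonneg _
  have htail : ∀ B ⊆ univ, IsBounded B → ∀ ε > (0 : ℝ),
      ∃ J, ∀ j ≥ J, ∀ p, ∀ x ∈ B, |G j p x| ≤ ε := by
    intro B _ hB ε hε
    obtain ⟨C, hC⟩ := hw T B hB
    have hlim : Tendsto (fun j : ℕ => C * Real.exp (-j)) atTop (𝓝 0) := by
      simpa using (Real.tendsto_exp_neg_atTop_nhds_zero.comp
        tendsto_natCast_atTop_atTop).const_mul C
    obtain ⟨J, hJ⟩ := eventually_atTop.1 (hlim.eventually (ge_mem_nhds hε))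
    refine ⟨J, fun j hj p x hx => abs_le.2 ⟨?_, ?_⟩⟩
    · exact (neg_nonpos.2 hε.le).trans
        (mul_nonneg (Real.exp_pos _).le (ha _ (norm_nonneg _)))
    · calc G j p x ≤ w p.1 x * Real.exp (-j) := converseLyapunov_term_le_mul_exp hdecay p.1 x p.2 j
        _ ≤ C * Real.exp (-j) :=
          mul_le_mul_of_nonneg_right (hC p.1 (mem_Iic.1 p.1.2) x hx) (Real.exp_pos _).le
        _ ≤ ε := hJ j hj
  exact ((EquiCUOn.of_tail hG htail).comp_index
    fun p : Iic T × (ℕ × (ℕ → D)) => (p.2.1, (p.1, p.2.2))).ciSup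

end ConverseLyapunov

lemma IsKPlus.exists_bound_comp_mul_norm {X : Type*} [NormedAddCommGroup X] {β Ψ : ℝ → ℝ}
    (hβ : IsKPlus β) (hΨ : MonotoneOn Ψ (Ici 0)) (T : ℕ) {B : Set X} (hB : IsBounded B) :
    ∃ C, ∀ t ≤ T, ∀ x ∈ B, Ψ (β t * ‖x‖) ≤ C := by
  obtain ⟨M, hM⟩ := isCompact_Icc.bddAbove_image
    (hβ.1.mono Icc_subset_Ici_self : ContinuousOn β (Icc 0 T))
  obtain ⟨R, hR⟩ := isBounded_iff_forall_norm_le.1 hB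
  refine ⟨Ψ (max M 0 * max R 0), fun t ht x hx => hΨ ?_ ?_ ?_⟩
  · exact mul_nonneg (hβ.2 t t.cast_nonneg).le (norm_nonneg x)
  · exact mul_nonneg (le_max_right M 0) (le_max_right R 0)
  · refine mul_le_mul ((hM (mem_image_of_mem β ⟨t.cast_nonneg, Nat.cast_le.2 ht⟩)).trans
      (le_max_left _ _)) ((hR x hx).trans (le_max_left _ _)) (norm_nonneg x) (le_max_right _ _)

section ClosedLoop

variable {X U Y' D : Type*} [NormedAddCommGroup X] [NormedAddCommGroup U] [NormedAddCommGroup Y']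

lemma equiCUOn_uncurry_of_forall {W : Type*} [NormedAddCommGroup W] {f : ℕ → D → X → U → W}
    {T : ℕ}
    (hf : ∀ B : Set (X × U), IsBounded B → ∀ ε > (0 : ℝ),
      IsBounded {y : W | ∃ t ≤ T, ∃ d : D, ∃ p ∈ B, y = f t d p.1 p.2} ∧
      ∃ δ > (0 : ℝ), ∀ t ≤ T, ∀ p ∈ B, ∀ p₀ ∈ B,
        ‖p.1 - p₀.1‖ + ‖p.2 - p₀.2‖ < δ → ∀ d : D, ‖f t d p.1 p.2 - f t d p₀.1 p₀.2‖ < ε) :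
    EquiCUOn univ (fun p : Iic T × D => fun q : X × U => f p.1 p.2 q.1 q.2) := by
  intro B _ hB
  refine ⟨(hf B hB 1 one_pos).1.subset ?_, fun ε hε => ?_⟩
  · rintro _ ⟨_, ⟨⟨t, d⟩, rfl⟩, q, hq, rfl⟩
    exact ⟨t, t.2, d, q, hq, rfl⟩
  obtain ⟨-, δ, hδ, hδf⟩ := hf B hB ε hε
  refine ⟨δ / 2, half_pos hδ, fun p q hq q' hq' hqq' => ?_⟩
  rw [Prod.dist_eq, max_lt_iff, dist_eq_norm, dist_eq_norm] at hqq'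
  rw [dist_eq_norm]
  exact hδf p.1 p.1.2 q hq q' hq' (by linarith) p.2

lemma equiCUOn_closedLoop {f : ℕ → D → X → U → X} {h : ℕ → X → Y'} {k : ℕ → Y' → U} {S : Set Y'}
    (hf : ∀ T : ℕ, EquiCUOn univ (fun p : Iic T × D => fun q : X × U => f p.1 p.2 q.1 q.2))
    (hh : MemCUOn univ h) (hk : MemCUOn S k) (hS : ∀ t x, h t x ∈ S) (T : ℕ) :
    EquiCUOn univ (fun p : Iic T × D => fun x => f p.1 p.2 x (k p.1 (h p.1 x))) :=
  (hf T).comp ((LipschitzWith.id.equiCUOn univ).prodMk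
    (((hk.equiCUOn T).comp (hh.equiCUOn T) fun t x _ => hS t x).comp_index Prod.fst))
    fun _ _ _ => mem_univ _

end ClosedLoop

lemma norm_output_orbit_le {X Y D : Type*} [NormedAddCommGroup X] [NormedAddCommGroup Y]
    {F : ℕ → D → X → X} {H : ℕ → X → Y} {σ : ℝ → ℝ → ℝ} {β : ℝ → ℝ}
    (hsol : ∀ (d : ℕ → D) (t₀ : ℕ) (x₀ : X) (x : ℕ → X), x t₀ = x₀ →
      (∀ t, t₀ ≤ t → x (t + 1) = F t (d t) (x t)) →
      ∀ t, t₀ ≤ t → ‖H t (x t)‖ ≤ σ (β t₀ * ‖x₀‖) ((t : ℝ) - (t₀ : ℝ)))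
    (t : ℕ) (x : X) (d : ℕ → D) (j : ℕ) :
    ‖H (t + j) (orbit F t x d j)‖ ≤ σ (β t * ‖x‖) j := by
  have := hsol (fun τ => d (τ - t)) t x (fun τ => orbit F t x d (τ - t)) (by simp [orbit])
    (fun τ hτ => orbit_sub_succ F x d hτ) (t + j) (Nat.le_add_right t j)
  simpa using this

theorem thm42_general {X Y Y' U D : Type*}
    [NormedAddCommGroup X] [NormedAddCommGroup Y]
    [NormedAddCommGroup Y'] [NormedAddCommGroup U]
    [Nonempty D]
    (f : ℕ → D → X → U → X) (H : ℕ → X → Y) (h : ℕ → X → Y') (S : Set Y')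
    -- Hypothesis (A2)
    (hA2 : ∀ (T : ℕ) (B : Set (X × U)), Bornology.IsBounded B → ∀ ε > (0 : ℝ),
      Bornology.IsBounded {y : X | ∃ t ≤ T, ∃ d : D, ∃ p ∈ B, y = f t d p.1 p.2} ∧
      ∃ δ > (0 : ℝ), ∀ t ≤ T, ∀ p ∈ B, ∀ p₀ ∈ B,
        ‖p.1 - p₀.1‖ + ‖p.2 - p₀.2‖ < δ →
        ∀ d : D, ‖f t d p.1 p.2 - f t d p₀.1 p₀.2‖ < ε)
    -- Hypothesis (H2)
    (hH2 : ∀ (T : ℕ) (B : Set X), Bornology.IsBounded B → ∀ ε > (0 : ℝ),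
      Bornology.IsBounded {y : Y | ∃ t ≤ T, ∃ x ∈ B, y = H t x} ∧
      ∃ δ > (0 : ℝ), ∀ t ≤ T, ∀ x ∈ B, ∀ x₀ ∈ B, ‖x - x₀‖ < δ → ‖H t x - H t x₀‖ < ε)
    -- Hypothesis (A3)
    (hhCU : MemCUOn (Set.univ : Set X) h)
    (hS : ∀ t : ℕ, h t '' Set.univ = S)
    -- the stabilizing static output feedback
    (k : ℕ → Y' → U)
    (hkCU : MemCUOn S k)
    (hCL : ∃ (σ : ℝ → ℝ → ℝ) (β : ℝ → ℝ), IsKL σ ∧ IsKPlus β ∧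
      ∀ (d : ℕ → D) (t₀ : ℕ) (x₀ : X) (x : ℕ → X), x t₀ = x₀ →
        (∀ t, t₀ ≤ t → x (t + 1) = f t (d t) (x t) (k t (h t (x t)))) →
        ∀ t, t₀ ≤ t → ‖H t (x t)‖ ≤ σ (β t₀ * ‖x₀‖) ((t : ℝ) - (t₀ : ℝ))) :
    ∃ (V : ℕ → X → ℝ) (a₁ a₂ β₁ β₂ : ℝ → ℝ) (lam : ℝ),
      MemCUOn (Set.univ : Set X) V ∧ (∀ (t : ℕ) (x : X), 0 ≤ V t x) ∧
      IsKInf a₁ ∧ IsKInf a₂ ∧ IsKPlus β₁ ∧ IsKPlus β₂ ∧ 0 < lam ∧ lam < 1 ∧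
      (∀ (t : ℕ) (x : X), a₁ ‖H t x‖ ≤ V t x ∧ V t x ≤ a₂ (β₂ t * ‖x‖)) ∧
      -- inequality (4.2b): the inf over u of the sup over h⁻¹(t,y) × D is ≤ 0
      (∀ (t : ℕ), ∀ y ∈ S, ∀ ε > (0 : ℝ), ∃ u : U,
        ∀ x : X, h t x = y → ∀ d : D, V (t + 1) (f t d x u) - lam * V t x ≤ ε) ∧
      -- inequality (4.2e), under the extra assumption k(t,0) = 0
      ((∀ t : ℕ, k t 0 = 0) →
        ∀ (t : ℕ) (x : X), h t x = 0 → ∀ d : D,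
          V (t + 1) (f t d x 0) - lam * V t x ≤ 0) := by
  obtain ⟨σ, β, hσ, hβ, hsol⟩ := hCL
  obtain ⟨a, Ψ, ha, hΨ_cont, hΨ_mono, hΨ_zero, hdecay⟩ := hσ.exists_isKInf_le_mul_exp
  set F : ℕ → D → X → X := fun t d x => f t d x (k t (h t x))
  have hβ_nonneg : ∀ (t : ℕ) (x : X), 0 ≤ β t * ‖x‖ := fun t x =>
    mul_nonneg (hβ.2 t t.cast_nonneg).le (norm_nonneg x)
  have hdecay_orbit : ∀ t x d (j : ℕ),
      a ‖H (t + j) (orbit F t x d j)‖ ≤ Ψ (β t * ‖x‖) * Real.exp (-(2 * j)) := fun t x d j =>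
    (ha.2.1.monotoneOn (norm_nonneg _) (hσ.nonneg (hβ_nonneg t x) j.cast_nonneg)
      (norm_output_orbit_le (F := F) hsol t x d j)).trans (hdecay _ (hβ_nonneg t x) j)
  have ha_nonneg : ∀ r, 0 ≤ r → 0 ≤ a r := fun r hr => ha.nonneg hr
  have hstep := converseLyapunov_step hdecay_orbit ha_nonneg
  have hV_CU : MemCUOn univ (converseLyapunov F H a) :=
    memCUOn_univ_of_equiCUOn <| equiCUOn_converseLyapunov hdecay_orbit ha_nonneg
      (equiCUOn_closedLoop (fun T => equiCUOn_uncurry_of_forall (hA2 T)) hhCU hkCU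
        fun t x => hS t ▸ mem_image_of_mem (h t) (mem_univ x))
      (fun T => equiCUOn_Iic_of_forall fun B _ hB => hH2 T B hB) ha.1
      fun T _ hB => hβ.exists_bound_comp_mul_norm hΨ_mono T hB
  refine ⟨converseLyapunov F H a, a, fun r => r + Ψ r, fun _ => 1, β, Real.exp (-1), hV_CU,
    converseLyapunov_nonneg hdecay_orbit ha_nonneg, ha, isKInf_id_add hΨ_cont hΨ_mono hΨ_zero,
    ⟨continuousOn_const, fun _ _ => one_pos⟩, hβ, Real.exp_pos _,
    Real.exp_lt_one_iff.2 (by norm_num),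
    fun t x => ⟨le_converseLyapunov hdecay_orbit ha_nonneg t x,
      (converseLyapunov_le hdecay_orbit ha_nonneg t x).trans
        (le_add_of_nonneg_left (hβ_nonneg t x))⟩,
    fun t y _ ε hε => ⟨k t y, fun x hx d => ?_⟩, fun hk0 t x hx d => ?_⟩
  · rw [← hx]
    linarith [hstep t x d]
  · rw [← hk0 t, ← hx]
    linarith [hstep t x d]

/-- Theorem 4.2: necessary Lyapunov-like conditions for the solvability of the
continuous static ROFS problem. -/
theorem thm42 {X Y Y' U D : Type*}
    [NormedAddCommGroup X] [NormedSpace ℝ X] [NormedAddCommGroup Y] [NormedSpace ℝ Y]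
    [NormedAddCommGroup Y'] [NormedSpace ℝ Y'] [NormedAddCommGroup U] [NormedSpace ℝ U]
    [Nonempty D]
    (f : ℕ → D → X → U → X) (H : ℕ → X → Y) (h : ℕ → X → Y') (S : Set Y')
    (hf00 : ∀ (t : ℕ) (d : D), f t d 0 0 = 0)
    -- Hypothesis (A2)
    (hA2 : ∀ (T : ℕ) (B : Set (X × U)), Bornology.IsBounded B → ∀ ε > (0 : ℝ),
      Bornology.IsBounded {y : X | ∃ t ≤ T, ∃ d : D, ∃ p ∈ B, y = f t d p.1 p.2} ∧
      ∃ δ > (0 : ℝ), ∀ t ≤ T, ∀ p ∈ B, ∀ p₀ ∈ B,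
        ‖p.1 - p₀.1‖ + ‖p.2 - p₀.2‖ < δ →
        ∀ d : D, ‖f t d p.1 p.2 - f t d p₀.1 p₀.2‖ < ε)
    -- Hypothesis (H2)
    (hH0 : ∀ t : ℕ, H t 0 = 0)
    (hH2 : ∀ (T : ℕ) (B : Set X), Bornology.IsBounded B → ∀ ε > (0 : ℝ),
      Bornology.IsBounded {y : Y | ∃ t ≤ T, ∃ x ∈ B, y = H t x} ∧
      ∃ δ > (0 : ℝ), ∀ t ≤ T, ∀ x ∈ B, ∀ x₀ ∈ B, ‖x - x₀‖ < δ → ‖H t x - H t x₀‖ < ε)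
    -- Hypothesis (A3)
    (hhCU : MemCUOn (Set.univ : Set X) h) (hh0 : ∀ t : ℕ, h t 0 = 0)
    (hS : ∀ t : ℕ, h t '' Set.univ = S)
    (a₀ : Y' → Y') (ha₀cont : Continuous a₀)
    (ha₀CU : ∀ (B : Set Y'), Bornology.IsBounded B → ∀ ε > (0 : ℝ),
      Bornology.IsBounded (a₀ '' B) ∧
      ∃ δ > (0 : ℝ), ∀ y ∈ B, ∀ y' ∈ B, ‖y - y'‖ < δ → ‖a₀ y - a₀ y'‖ < ε)
    (ha₀S : ∀ y : Y', a₀ y ∈ S) (ha₀id : ∀ y ∈ S, a₀ y = y)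
    -- the stabilizing static output feedback
    (k : ℕ → Y' → U)
    (hkCU : MemCUOn S k)
    (hkeq : ∀ (t : ℕ) (d : D), f t d 0 (k t 0) = 0)
    (hCL : ∃ (σ : ℝ → ℝ → ℝ) (β : ℝ → ℝ), IsKL σ ∧ IsKPlus β ∧
      ∀ (d : ℕ → D) (t₀ : ℕ) (x₀ : X) (x : ℕ → X), x t₀ = x₀ →
        (∀ t, t₀ ≤ t → x (t + 1) = f t (d t) (x t) (k t (h t (x t)))) →
        ∀ t, t₀ ≤ t → ‖H t (x t)‖ ≤ σ (β t₀ * ‖x₀‖) ((t : ℝ) - (t₀ : ℝ))) :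
    ∃ (V : ℕ → X → ℝ) (a₁ a₂ β₁ β₂ : ℝ → ℝ) (lam : ℝ),
      MemCUOn (Set.univ : Set X) V ∧ (∀ (t : ℕ) (x : X), 0 ≤ V t x) ∧
      IsKInf a₁ ∧ IsKInf a₂ ∧ IsKPlus β₁ ∧ IsKPlus β₂ ∧ 0 < lam ∧ lam < 1 ∧
      (∀ (t : ℕ) (x : X), a₁ ‖H t x‖ ≤ V t x ∧ V t x ≤ a₂ (β₂ t * ‖x‖)) ∧
      -- inequality (4.2b): the inf over u of the sup over h⁻¹(t,y) × D is ≤ 0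
      (∀ (t : ℕ), ∀ y ∈ S, ∀ ε > (0 : ℝ), ∃ u : U,
        ∀ x : X, h t x = y → ∀ d : D, V (t + 1) (f t d x u) - lam * V t x ≤ ε) ∧
      -- inequality (4.2e), under the extra assumption k(t,0) = 0
      ((∀ t : ℕ, k t 0 = 0) →
        ∀ (t : ℕ) (x : X), h t x = 0 → ∀ d : D,
          V (t + 1) (f t d x 0) - lam * V t x ≤ 0) :=
  thm42_general f H h S hA2 hH2 hhCU hS k hkCU hCL
end
end

section
/- Example 2.3 (RGAOS of system (2.18)). Consider the discrete-time system on ℝ²: x₁(t+1) = d(t)·x₁(t), x₂(t+1) = 2^{−t}·d(t)·|x₁(t)|^{1/2}, with output Y(t) = x₂(t), where d(t) ∈ [−2, 2] for all t ∈ ℕ. Then this system is non-uniformly in time RGAOS; that is, there exist σ ∈ KL and β ∈ K⁺ such that for every disturbance sequence d : ℕ → [−2,2], every t₀ ∈ ℕ and every x₀ = (x₁(t₀), x₂(t₀)) ∈ ℝ², the solution satisfies |x₂(t)| ≤ σ(β(t₀)·|x₀|, t − t₀) for all t ≥ t₀, where |x₀| is the Euclidean norm of x₀. -/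
/-!
The first coordinate grows at most geometrically, `|x₁ (t₀ + k)| ≤ 2 ^ k |x₁ t₀|`, so the
square root in the second equation grows at most like `2 ^ (k / 2)`. The factor `2 ^ (-t)` with
`t = t₀ + k ≥ k` beats this growth, giving `|x₂ (t₀ + k + 1)| ≤ 2 ^ ((3 - (k + 1)) / 2) √|x₀|`.
Hence `σ s t = 2 ^ ((3 - t) / 2) (s + √s)` and `β ≡ 1` work.
-/

open Filter Topology Bornology Set

noncomputable section

open Real

theorem isKL_mul {g α : ℝ → ℝ} (hα_cont : ContinuousOn α (Ici 0))
    (hα_mono : StrictMonoOn α (Ici 0)) (hα_zero : α 0 = 0) (hg_cont : ContinuousOn g (Ici 0))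
    (hg_pos : ∀ t, 0 ≤ t → 0 < g t) (hg_anti : AntitoneOn g (Ici 0))
    (hg_lim : Tendsto g atTop (𝓝 0)) :
    IsKL (fun s t => g t * α s) := by
  refine ⟨?_, fun t ht => ⟨?_, by simp [hα_zero]⟩,
    fun s hs => ⟨?_, by simpa using hg_lim.mul_const (α s)⟩⟩
  · exact (hg_cont.comp continuousOn_snd fun p hp => hp.2).mul
      (hα_cont.comp continuousOn_fst fun p hp => hp.1)
  · exact fun a ha b hb hab => mul_lt_mul_of_pos_left (hα_mono ha hb hab) (hg_pos t ht)
  · have hαs : 0 ≤ α s := hα_zero ▸ hα_mono.monotoneOn self_mem_Ici hs hs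
    exact fun a ha b hb hab => mul_le_mul_of_nonneg_right (hg_anti ha hb hab) hαs

theorem isKL_two_rpow_mul_add_sqrt : IsKL (fun s t => (2 : ℝ) ^ ((3 - t) / 2) * (s + √s)) := by
  refine isKL_mul (by fun_prop)
    (fun a _ b _ hab => add_lt_add_of_lt_of_le hab (sqrt_le_sqrt hab.le)) (by simp)
    (continuous_const.rpow (by fun_prop) fun _ => Or.inl two_ne_zero).continuousOn
    (fun t _ => by positivity)
    (fun a _ b _ hab => rpow_le_rpow_of_exponent_le one_le_two (by linarith)) ?_
  refine (tendsto_rpow_atBot_of_base_gt_one 2 one_lt_two).comp (Tendsto.atBot_div_const two_pos ?_)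
  exact (tendsto_atBot_add_const_left atTop 3 tendsto_neg_atTop_atBot).congr fun t =>
    (sub_eq_add_neg 3 t).symm

theorem abs_two_rpow_neg_mul_mul_rpow_half_le {d x r : ℝ} {t₀ k : ℕ} (hd : |d| ≤ 2)
    (hx : |x| ≤ 2 ^ k * r) :
    |(2 : ℝ) ^ (-((t₀ + k : ℕ) : ℝ)) * d * |x| ^ ((1 : ℝ) / 2)|
      ≤ (2 : ℝ) ^ ((3 - ((k : ℝ) + 1)) / 2) * √r := by
  have hsqrt : |x| ^ ((1 : ℝ) / 2) ≤ 2 ^ ((k : ℝ) / 2) * √r := by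
    calc |x| ^ ((1 : ℝ) / 2) = √|x| := (sqrt_eq_rpow _).symm
      _ ≤ √(2 ^ k * r) := sqrt_le_sqrt hx
      _ = 2 ^ ((k : ℝ) / 2) * √r := by
        rw [sqrt_mul (by positivity), sqrt_eq_rpow, ← rpow_natCast, ← rpow_mul zero_le_two]
        ring_nf
  have hexp : (2 : ℝ) ^ (-((t₀ + k : ℕ) : ℝ)) * 2 * 2 ^ ((k : ℝ) / 2)
      ≤ 2 ^ ((3 - ((k : ℝ) + 1)) / 2) := by
    rw [← rpow_add_one two_ne_zero, ← rpow_add two_pos]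
    exact rpow_le_rpow_of_exponent_le one_le_two
      (by push_cast; linarith [(t₀.cast_nonneg : (0 : ℝ) ≤ t₀)])
  rw [abs_mul, abs_mul, abs_of_pos (rpow_pos_of_pos two_pos _),
    abs_of_nonneg (rpow_nonneg (abs_nonneg x) _)]
  calc _ ≤ (2 : ℝ) ^ (-((t₀ + k : ℕ) : ℝ)) * 2 * (2 ^ ((k : ℝ) / 2) * √r) := by gcongr
    _ ≤ _ := by rw [← mul_assoc]; gcongr

/-- Example 2.3: system (2.18) is non-uniformly in time RGAOS. -/
theorem example23_RGAOS :
    ∃ (σ : ℝ → ℝ → ℝ) (β : ℝ → ℝ), IsKL σ ∧ IsKPlus β ∧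
      ∀ (d : ℕ → ℝ), (∀ t : ℕ, d t ∈ Set.Icc (-2 : ℝ) 2) →
        ∀ (t₀ : ℕ) (x₁ x₂ : ℕ → ℝ),
          (∀ t, t₀ ≤ t →
            x₁ (t + 1) = d t * x₁ t ∧
            x₂ (t + 1) = (2 : ℝ) ^ (-(t : ℝ)) * d t * |x₁ t| ^ ((1 : ℝ) / 2)) →
          ∀ t, t₀ ≤ t →
            |x₂ t| ≤ σ (β t₀ * Real.sqrt ((x₁ t₀) ^ 2 + (x₂ t₀) ^ 2))
              ((t : ℝ) - (t₀ : ℝ)) := by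
  refine ⟨fun s t => (2 : ℝ) ^ ((3 - t) / 2) * (s + √s), fun _ => 1, isKL_two_rpow_mul_add_sqrt,
    ⟨continuousOn_const, fun _ _ => one_pos⟩, ?_⟩
  intro d hd t₀ x₁ x₂ hsys t ht
  obtain ⟨k, rfl⟩ := Nat.exists_eq_add_of_le ht
  set r := √(x₁ t₀ ^ 2 + x₂ t₀ ^ 2)
  have hx₁ : ∀ j, |x₁ (t₀ + j)| ≤ 2 ^ j * r := fun j => by
    refine (le_geom (u := fun i => |x₁ (t₀ + i)|) zero_le_two j fun i _ => ?_).trans ?_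
    · rw [← add_assoc, (hsys _ (Nat.le_add_right t₀ i)).1, abs_mul]
      exact mul_le_mul_of_nonneg_right (abs_le.2 (hd _)) (abs_nonneg _)
    · exact mul_le_mul_of_nonneg_left (abs_le_sqrt (le_add_of_nonneg_right (sq_nonneg _)))
        (by positivity)
  beta_reduce
  rw [one_mul, show ((t₀ + k : ℕ) : ℝ) - t₀ = k by push_cast; ring]
  cases k with
  | zero =>
    calc |x₂ (t₀ + 0)| ≤ r := abs_le_sqrt (le_add_of_nonneg_left (sq_nonneg _))
      _ ≤ 1 * (r + √r) := by rw [one_mul]; exact le_add_of_nonneg_right (sqrt_nonneg r)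
      _ ≤ _ := by gcongr; exact one_le_rpow one_le_two (by norm_num)
  | succ k =>
    rw [← add_assoc, (hsys _ (Nat.le_add_right t₀ k)).2]
    calc _ ≤ (2 : ℝ) ^ ((3 - ((k : ℝ) + 1)) / 2) * √r :=
          abs_two_rpow_neg_mul_mul_rpow_half_le (abs_le.2 (hd _)) (hx₁ k)
      _ ≤ _ := by push_cast; gcongr; exact le_add_of_nonneg_left (sqrt_nonneg _)
end
end
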